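/- arXiv:2402.09896 — 2 statements merged into one kernel-verified Lean document; each statement's English description precedes it below -/
import Mathlib

section
/- Let σ², τ, E_u, β̂, β̃_g, σ_v², λ_RIS, λ_BS, β̄ be positive reals (with β̃_g·σ_v² allowed to be 0), and suppose that (1/N)·Σ_{i=1}^N α_i(β_i^{w_k})² → s > 0 and (1/N)·Σ_{j=1}^K Σ_{i=1}^N α_i(β_i^{w_j})² → s' ≥ 0 as N → ∞. Under the power scaling p = E_u/N, the normalized MSE, NMSE_N = d_N/(a_N + c_N + d_N) with d_N = σ²·N/(τ·E_u), a_N = β̄ + β̂·λ_RIS·λ_BS·Σ_{i=1}^N α_i(β_i^{w_k})², and c_N = β̃_g·σ_v²·λ_RIS·λ_BS·Σ_{j=1}^K Σ_{i=1}^N α_i(β_i^{w_j})², converges as N → ∞ to σ²/(τ·E_u·β̂·λ_RIS·λ_BS·s + τ·E_u·β̃_g·σ_v²·λ_RIS·λ_BS·s' + σ²), a limit strictly less than 1. (This is the paper's power-scaling law for channel estimation: with pilot power scaled as E_u/N, the NMSE converges to a limit below one as the surface grows.) -/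
/-!
Divide numerator and denominator of `NMSE_N` by `N`: `d_N / N = σ² / (τ E_u)` is constant, while
`a_N / N` and `c_N / N` converge by the hypotheses on the averaged sums (the constant `β̄` in `a_N`
disappears). The limit is a ratio whose denominator exceeds the numerator by a positive amount.
-/

open Filter Topology Finset

lemma tendsto_affine_div_natCast {S : ℕ → ℝ} {s : ℝ} (b c : ℝ)
    (hS : Tendsto (fun N : ℕ => 1 / (N : ℝ) * S N) atTop (𝓝 s)) :
    Tendsto (fun N : ℕ => (b + c * S N) / N) atTop (𝓝 (c * s)) := by
  have h := (tendsto_one_div_atTop_nhds_zero_nat.const_mul b).add (hS.const_mul c)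
  rw [mul_zero, zero_add] at h
  exact h.congr fun N => by ring

lemma tendsto_mul_natCast_div_add {e : ℕ → ℝ} {E d : ℝ}
    (he : Tendsto (fun N : ℕ => e N / N) atTop (𝓝 E)) (hE : E + d ≠ 0) :
    Tendsto (fun N : ℕ => d * N / (e N + d * N)) atTop (𝓝 (d / (E + d))) := by
  refine (tendsto_const_nhds.div (he.add tendsto_const_nhds) hE).congr' ?_
  filter_upwards [eventually_ne_atTop 0] with N hN
  have hN' : (N : ℝ) ≠ 0 := Nat.cast_ne_zero.mpr hN
  show d / (e N / N + d) = _
  rw [← mul_div_mul_right d _ hN', add_mul, div_mul_cancel₀ _ hN']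

theorem stmt_7_general (K : ℕ)
    (σ2 τ Eu βhat βg σv2 lRIS lBS βbar : ℝ)
    (hσ2 : 0 < σ2) (hτ : 0 < τ) (hEu : 0 < Eu) (hβhat : 0 < βhat)
    (hβg : 0 ≤ βg) (hσv2 : 0 ≤ σv2) (hlRIS : 0 < lRIS) (hlBS : 0 < lBS)
    (α : ℕ → ℝ) (β : ℕ → Fin K → ℝ) (k : Fin K)
    (s s' : ℝ) (hs : 0 < s) (hs' : 0 ≤ s')
    (hsum : Tendsto
      (fun N : ℕ => (1 / (N : ℝ)) * ∑ i ∈ Finset.range N, α i * (β i k) ^ 2) atTop (𝓝 s))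
    (hsum' : Tendsto
      (fun N : ℕ => (1 / (N : ℝ)) * ∑ j : Fin K, ∑ i ∈ Finset.range N, α i * (β i j) ^ 2)
      atTop (𝓝 s'))
    (dN aN cN NMSE : ℕ → ℝ)
    (hdN : ∀ N, dN N = σ2 * N / (τ * Eu))
    (haN : ∀ N, aN N = βbar + βhat * lRIS * lBS * ∑ i ∈ Finset.range N, α i * (β i k) ^ 2)
    (hcN : ∀ N, cN N
      = βg * σv2 * lRIS * lBS * ∑ j : Fin K, ∑ i ∈ Finset.range N, α i * (β i j) ^ 2)
    (hNMSE : ∀ N, NMSE N = dN N / (aN N + cN N + dN N)) :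
    Tendsto NMSE atTop
        (𝓝 (σ2 / (τ * Eu * βhat * lRIS * lBS * s + τ * Eu * βg * σv2 * lRIS * lBS * s' + σ2)))
      ∧ σ2 / (τ * Eu * βhat * lRIS * lBS * s + τ * Eu * βg * σv2 * lRIS * lBS * s' + σ2) < 1 := by
  have ha : Tendsto (fun N : ℕ => aN N / N) atTop (𝓝 (βhat * lRIS * lBS * s)) :=
    (tendsto_affine_div_natCast βbar _ hsum).congr fun N => by rw [haN]
  have hc : Tendsto (fun N : ℕ => cN N / N) atTop (𝓝 (βg * σv2 * lRIS * lBS * s')) :=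
    (tendsto_affine_div_natCast 0 _ hsum').congr fun N => by rw [hcN, zero_add]
  have hlim : σ2 / (τ * Eu) /
        (βhat * lRIS * lBS * s + βg * σv2 * lRIS * lBS * s' + σ2 / (τ * Eu))
      = σ2 / (τ * Eu * βhat * lRIS * lBS * s + τ * Eu * βg * σv2 * lRIS * lBS * s' + σ2) := by
    field_simp
  refine ⟨?_, ?_⟩
  · rw [← hlim]
    refine (tendsto_mul_natCast_div_add ((ha.add hc).congr fun N => (add_div _ _ _).symm)
      (by positivity)).congr fun N => ?_
    rw [hNMSE, hdN, mul_div_right_comm σ2]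
  · have hA : 0 < τ * Eu * βhat * lRIS * lBS * s := by positivity
    have hC : 0 ≤ τ * Eu * βg * σv2 * lRIS * lBS * s' := by positivity
    rw [div_lt_one (by linarith)]
    linarith

/-- Power-scaling law for channel estimation: with pilot power scaled as `p = E_u/N`,
the NMSE converges, as the surface grows (`N → ∞`), to
`σ²/(τ·E_u·β̂·λ_RIS·λ_BS·s + τ·E_u·β̃_g·σ_v²·λ_RIS·λ_BS·s' + σ²) < 1`. -/
theorem stmt_7 (K : ℕ) (hK : 0 < K)
    (σ2 τ Eu βhat βg σv2 lRIS lBS βbar : ℝ)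
    (hσ2 : 0 < σ2) (hτ : 0 < τ) (hEu : 0 < Eu) (hβhat : 0 < βhat)
    (hβg : 0 ≤ βg) (hσv2 : 0 ≤ σv2) (hlRIS : 0 < lRIS) (hlBS : 0 < lBS) (hβbar : 0 < βbar)
    (α : ℕ → ℝ) (β : ℕ → Fin K → ℝ) (k : Fin K)
    (s s' : ℝ) (hs : 0 < s) (hs' : 0 ≤ s')
    (hsum : Tendsto
      (fun N : ℕ => (1 / (N : ℝ)) * ∑ i ∈ Finset.range N, α i * (β i k) ^ 2) atTop (𝓝 s))
    (hsum' : Tendsto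
      (fun N : ℕ => (1 / (N : ℝ)) * ∑ j : Fin K, ∑ i ∈ Finset.range N, α i * (β i j) ^ 2)
      atTop (𝓝 s'))
    (dN aN cN NMSE : ℕ → ℝ)
    (hdN : ∀ N, dN N = σ2 * N / (τ * Eu))
    (haN : ∀ N, aN N = βbar + βhat * lRIS * lBS * ∑ i ∈ Finset.range N, α i * (β i k) ^ 2)
    (hcN : ∀ N, cN N
      = βg * σv2 * lRIS * lBS * ∑ j : Fin K, ∑ i ∈ Finset.range N, α i * (β i j) ^ 2)
    (hNMSE : ∀ N, NMSE N = dN N / (aN N + cN N + dN N)) :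
    Tendsto NMSE atTop
        (𝓝 (σ2 / (τ * Eu * βhat * lRIS * lBS * s + τ * Eu * βg * σv2 * lRIS * lBS * s' + σ2)))
      ∧ σ2 / (τ * Eu * βhat * lRIS * lBS * s + τ * Eu * βg * σv2 * lRIS * lBS * s' + σ2) < 1 :=
  stmt_7_general K σ2 τ Eu βhat βg σv2 lRIS lBS βbar hσ2 hτ hEu hβhat hβg hσv2 hlRIS hlBS α β k s s'
    hs hs' hsum hsum' dN aN cN NMSE hdN haN hcN hNMSE
end

section
/- Let K be a positive integer, let β̄_1, …, β̄_K, σ², τ, E_d be positive reals, and fix a user index k. For each positive integer M set p_M = E_d/√M, d_M = σ²/(τ·p_M) = σ²·√M/(τ·E_d), and γ_k(M) = M·(β̄_k²/(β̄_k + d_M))² / (Σ_{i=1}^K β̄_k·β̄_i²/(β̄_i + d_M) + (K·σ²/p_M)·Σ_{i=1}^K β̄_i²/(β̄_i + d_M)). Then γ_k(M) converges as M → ∞ to the finite positive limit τ·E_d²·β̄_k⁴ / (σ⁴·K·Σ_{i=1}^K β̄_i²); consequently the per-user spectral efficiency log₂(1 + γ_k(M)) maintains a non-zero limit even though the transmit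 power is scaled down as p_M = E_d/√M. (This is the paper's power-scaling law for the no-surface massive MIMO benchmark.) -/
open Filter Topology Finset

/-!
Put `s = √M`. Since `p_M = E_d/s` and `d_M = c·s` with `c = σ²/(τ E_d)`, the SINR is
`(s·β̄_k²/(β̄_k + c s))² / (Σ_i β̄_k β̄_i²/(β̄_i + c s) + (K σ²/E_d)·Σ_i s·β̄_i²/(β̄_i + c s))`.
As `s → ∞` each `s·b/(a + c s)` tends to `b/c` and each `b/(a + c s)` to `0`, so the
growth `M` of the array gain exactly balances the loss `1/d_M²` of the channel-estimation
quality and the SINR tends to `β̄_k⁴ / (c · (K σ²/E_d) · Σ_i β̄_i²)`.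
-/

/-- `q` stands for the noise factor `K σ²/p` of the SINR. -/
noncomputable def mrtSINR {ι : Type*} [Fintype ι] (β : ι → ℝ) (k : ι) (M d q : ℝ) : ℝ :=
  M * (β k ^ 2 / (β k + d)) ^ 2
    / (∑ i, β k * (β i ^ 2 / (β i + d)) + q * ∑ i, β i ^ 2 / (β i + d))

lemma tendsto_div_add_mul_atTop_nhds_zero (a b : ℝ) {c : ℝ} (hc : 0 < c) :
    Tendsto (fun s : ℝ => b / (a + c * s)) atTop (𝓝 0) :=
  tendsto_const_nhds.div_atTop
    (tendsto_atTop_add_const_left _ a (tendsto_id.const_mul_atTop hc))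

lemma tendsto_mul_div_add_mul_atTop (a b : ℝ) {c : ℝ} (hc : c ≠ 0) :
    Tendsto (fun s : ℝ => s * (b / (a + c * s))) atTop (𝓝 (b / c)) := by
  have hlim : Tendsto (fun s : ℝ => b / (a * s⁻¹ + c)) atTop (𝓝 (b / (a * 0 + c))) :=
    tendsto_const_nhds.div ((tendsto_inv_atTop_zero.const_mul a).add_const c)
      (by simpa using hc)
  rw [mul_zero, zero_add] at hlim
  refine hlim.congr' ?_
  filter_upwards [eventually_gt_atTop 0] with s hs
  field_simp

theorem tendsto_mrtSINR_atTop {ι : Type*} [Fintype ι] (β : ι → ℝ) (k : ι) {a c : ℝ}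
    (hc : 0 < c) (ha : a ≠ 0) (hβ : ∑ i, β i ^ 2 ≠ 0) :
    Tendsto (fun s : ℝ => mrtSINR β k (s ^ 2) (c * s) (a * s)) atTop
      (𝓝 (β k ^ 4 / (c * a * ∑ i, β i ^ 2))) := by
  have hgain : Tendsto (fun s : ℝ => (s * (β k ^ 2 / (β k + c * s))) ^ 2) atTop
      (𝓝 ((β k ^ 2 / c) ^ 2)) :=
    (tendsto_mul_div_add_mul_atTop _ _ hc.ne').pow 2
  have hinterference : Tendsto (fun s : ℝ => ∑ i, β k * (β i ^ 2 / (β i + c * s))) atTop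
      (𝓝 (∑ _i : ι, β k * 0)) :=
    tendsto_finsetSum _ fun i _ =>
      (tendsto_div_add_mul_atTop_nhds_zero _ _ hc).const_mul (β k)
  have hnoise : Tendsto (fun s : ℝ => a * ∑ i, s * (β i ^ 2 / (β i + c * s))) atTop
      (𝓝 (a * ∑ i, β i ^ 2 / c)) :=
    (tendsto_finsetSum _ fun i _ => tendsto_mul_div_add_mul_atTop _ _ hc.ne').const_mul a
  have hlim := hgain.div (hinterference.add hnoise) (by
    simp only [mul_zero, sum_const_zero, zero_add, ← sum_div]
    exact mul_ne_zero ha (div_ne_zero hβ hc.ne'))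
  convert hlim using 1
  · ext s
    simp only [mrtSINR, Pi.div_apply, mul_pow, ← mul_sum, mul_assoc]
  · simp only [mul_zero, sum_const_zero, zero_add, ← sum_div]
    field_simp

theorem stmt_13_general (K : ℕ)
    (βbar : Fin K → ℝ) (hβbar : ∀ i, 0 < βbar i)
    (σ2 τ Ed : ℝ) (hσ2 : 0 < σ2) (hτ : 0 < τ) (hEd : 0 < Ed)
    (k : Fin K)
    (p d : ℕ → ℝ) (γ : ℕ → ℝ)
    (hp : ∀ M : ℕ, p M = Ed / Real.sqrt M)
    (hd : ∀ M : ℕ, d M = σ2 * Real.sqrt M / (τ * Ed))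
    (hγ : ∀ M : ℕ, γ M
      = (M : ℝ) * (βbar k ^ 2 / (βbar k + d M)) ^ 2
        / (∑ i : Fin K, βbar k * (βbar i ^ 2 / (βbar i + d M))
            + (K * σ2 / p M) * ∑ i : Fin K, βbar i ^ 2 / (βbar i + d M)))
    (L : ℝ)
    (hL : L = τ * Ed ^ 2 * βbar k ^ 4 / (σ2 ^ 2 * K * ∑ i : Fin K, βbar i ^ 2)) :
    Tendsto γ atTop (𝓝 L) ∧ 0 < L ∧
      Tendsto (fun M : ℕ => Real.logb 2 (1 + γ M)) atTop (𝓝 (Real.logb 2 (1 + L))) ∧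
      Real.logb 2 (1 + L) ≠ 0 := by
  have hKpos : (0 : ℝ) < K := Nat.cast_pos.mpr k.pos
  have hβsq : 0 < ∑ i, βbar i ^ 2 := sum_pos (fun i _ => pow_pos (hβbar i) 2) ⟨k, mem_univ k⟩
  have hγ_eq : γ = fun M : ℕ =>
      mrtSINR βbar k (√M ^ 2) (σ2 / (τ * Ed) * √M) (K * σ2 / Ed * √M) := by
    ext M
    -- this holds at `M = 0` too, where `p 0 = 0` and both sides are `0`
    rw [hγ, hd, hp, Real.sq_sqrt M.cast_nonneg, mrtSINR, div_div_eq_mul_div]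
    ring_nf
  have hL_eq : L = βbar k ^ 4 / (σ2 / (τ * Ed) * (K * σ2 / Ed) * ∑ i, βbar i ^ 2) := by
    rw [hL]
    field_simp
  have hLim : Tendsto γ atTop (𝓝 L) := by
    rw [hγ_eq, hL_eq]
    exact (tendsto_mrtSINR_atTop βbar k (by positivity) (by positivity) hβsq.ne').comp
      (Real.tendsto_sqrt_atTop.comp tendsto_natCast_atTop_atTop)
  have hLpos : 0 < L := by
    have hβk := hβbar k
    rw [hL]
    positivity
  have hlog : ContinuousAt (fun x => Real.logb 2 (1 + x)) L :=
    ((Real.continuousAt_log (by linarith)).comp (by fun_prop)).div_const _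
  exact ⟨hLim, hLpos, hlog.tendsto.comp hLim, (Real.logb_pos one_lt_two (by linarith)).ne'⟩

/-- Power-scaling law for the no-surface massive MIMO benchmark: with transmit power
`p_M = E_d/√M`, the SINR `γ_k(M)` converges, as `M → ∞`, to the finite positive limit
`τ·E_d²·β̄_k⁴ / (σ⁴·K·Σ_i β̄_i²)`, so the per-user spectral efficiency
`log₂(1 + γ_k(M))` maintains a non-zero limit. -/
theorem stmt_13 (K : ℕ) (hK : 0 < K)
    (βbar : Fin K → ℝ) (hβbar : ∀ i, 0 < βbar i)
    (σ2 τ Ed : ℝ) (hσ2 : 0 < σ2) (hτ : 0 < τ) (hEd : 0 < Ed)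
    (k : Fin K)
    (p d : ℕ → ℝ) (γ : ℕ → ℝ)
    (hp : ∀ M : ℕ, p M = Ed / Real.sqrt M)
    (hd : ∀ M : ℕ, d M = σ2 * Real.sqrt M / (τ * Ed))
    (hγ : ∀ M : ℕ, γ M
      = (M : ℝ) * (βbar k ^ 2 / (βbar k + d M)) ^ 2
        / (∑ i : Fin K, βbar k * (βbar i ^ 2 / (βbar i + d M))
            + (K * σ2 / p M) * ∑ i : Fin K, βbar i ^ 2 / (βbar i + d M)))
    (L : ℝ)
    (hL : L = τ * Ed ^ 2 * βbar k ^ 4 / (σ2 ^ 2 * K * ∑ i : Fin K, βbar i ^ 2)) :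
    Tendsto γ atTop (𝓝 L) ∧ 0 < L ∧
      Tendsto (fun M : ℕ => Real.logb 2 (1 + γ M)) atTop (𝓝 (Real.logb 2 (1 + L))) ∧
      Real.logb 2 (1 + L) ≠ 0 :=
  stmt_13_general K βbar hβbar σ2 τ Ed hσ2 hτ hEd k p d γ hp hd hγ L hL
end
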